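/- arXiv:1111.1836 — 2 statements merged into one kernel-verified Lean document; each statement's English description precedes it below -/
import Mathlib

section
/- Let φ : K → L be a strong covering of finite simplicial complexes: a covering map such that for every (n+1)-simplex Ḡ of L with facet G and every F ∈ φ^{-1}(G), there exists an (n+1)-simplex F̄ of K with F ∈ ∂F̄ and φ(F̄) = Ḡ. Then for every n-simplex F of K with φ(F) = G, the number of (n+1)-simplices of K containing F equals the number of (n+1)-simplices of L containing G. -/
/-- A finite abstract simplicial complex on vertex set `Fin m`:
a collection of nonempty finite vertex sets closed under taking nonempty subsets. -/
def IsComplex {m : ℕ} (K : Finset (Finset (Fin m))) : Prop :=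
  (∀ s ∈ K, s.Nonempty) ∧ ∀ s ∈ K, ∀ t, t ⊆ s → t.Nonempty → t ∈ K

/-- The `n`-dimensional faces (simplices with `n+1` vertices) of `K`. -/
def faces {m : ℕ} (K : Finset (Finset (Fin m))) (n : ℕ) : Finset (Finset (Fin m)) :=
  K.filter fun s => s.card = n + 1

/-- The incidence sign `(-1)^i` where `i` is the position of vertex `v` in the
canonically (increasingly) ordered vertex list of the simplex `s`. -/
def incSign {m : ℕ} (s : Finset (Fin m)) (v : Fin m) : ℝ :=
  (-1 : ℝ) ^ ((s.sort (· ≤ ·)).idxOf v)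

/-- Simplicial coboundary with respect to canonical orientations:
`(δ f)([v₀,…,v_{n+1}]) = Σᵢ (-1)ⁱ f([v₀,…,v̂ᵢ,…,v_{n+1}])`. -/
def coboundary {m : ℕ} (f : Finset (Fin m) → ℝ) (s : Finset (Fin m)) : ℝ :=
  ∑ v ∈ s, incSign s v * f (s.erase v)

/-- The weighted up-Laplacian `L^{up}_n = δ_n^* δ_n` on `n`-cochains, where the formal
adjoint `δ_n^*` is taken with respect to the weighted inner products
`(f,g) = Σ_F w(F) f(F) g(F)` and is extended by zero on simplices of weight zero. -/
noncomputable def upLap {m : ℕ} (K : Finset (Finset (Fin m))) (w : Finset (Fin m) → ℝ) (n : ℕ)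
    (f : Finset (Fin m) → ℝ) (F : Finset (Fin m)) : ℝ :=
  if w F = 0 then 0 else
    (w F)⁻¹ * ∑ s ∈ (faces K (n + 1)).filter (fun s => F ⊆ s),
      w s * (∑ v ∈ s \ F, incSign s v) * coboundary f s

/-- `lam : Fin N → ℝ` is the non-decreasing enumeration (with multiplicity) of the
eigenvalues of the weighted up-Laplacian `L^{up}_n(K, w)` acting on `C^n(K, ℝ)`:
there is a linearly independent eigenbasis realizing these eigenvalues. -/
def eigenseq {m : ℕ} (K : Finset (Finset (Fin m))) (w : Finset (Fin m) → ℝ) (n : ℕ)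
    {N : ℕ} (lam : Fin N → ℝ) : Prop :=
  Monotone lam ∧ N = (faces K n).card ∧
    ∃ f : Fin N → (Finset (Fin m) → ℝ),
      LinearIndependent ℝ f ∧
      (∀ i F, F ∉ faces K n → f i F = 0) ∧
      (∀ i F, F ∈ faces K n → upLap K w n (f i) F = lam i * f i F)

/-- Extension of a finite eigenvalue sequence `lam : Fin N → ℝ` to integer indices,
by `lo` for indices `≤ 0` and by `hi` for indices `> N`. -/
def extSeq {N : ℕ} (lam : Fin N → ℝ) (lo hi : ℝ) (j : ℤ) : ℝ :=
  if h : 1 ≤ j ∧ j ≤ (N : ℤ) then lam ⟨(j - 1).toNat, by omega⟩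
  else if j ≤ 0 then lo else hi

/-- The orientation sign of the image of the simplex `F` under the vertex map `φ`,
with respect to canonical (increasing) orderings: `0` if the image is degenerate,
otherwise the sign of the permutation sorting the image list. -/
def mapSign {a b : ℕ} (φ : Fin a → Fin b) (F : Finset (Fin a)) : ℝ :=
  let l : List (Fin b) := (F.sort (· ≤ ·)).map φ
  if l.Nodup then
    (-1 : ℝ) ^ (Finset.univ.filter
      (fun p : Fin l.length × Fin l.length => p.1 < p.2 ∧ l.get p.2 < l.get p.1)).card
  else 0

/-- The cochain map induced by a vertex map `φ`:
`(φ g)([v₀,…,v_n]) = g([φ(v₀),…,φ(v_n)])` (zero on degenerate images). -/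
noncomputable def pullback {a b : ℕ} (φ : Fin a → Fin b) (g : Finset (Fin b) → ℝ)
    (F : Finset (Fin a)) : ℝ :=
  mapSign φ F * g (F.image φ)

/-- The formal adjoint `φ^*` of the induced cochain map with respect to the
weighted inner products on `C^n(K, w_K)` and `C^n(L, w_L)`. -/
noncomputable def pushforward {a b : ℕ} (φ : Fin a → Fin b) (K : Finset (Finset (Fin a)))
    (wK : Finset (Fin a) → ℝ) (wL : Finset (Fin b) → ℝ) (n : ℕ)
    (f : Finset (Fin a) → ℝ) (G : Finset (Fin b)) : ℝ :=
  if wL G = 0 then 0 else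
    (wL G)⁻¹ * ∑ F ∈ (faces K n).filter (fun F => F.image φ = G),
      wK F * mapSign φ F * f F

/-- `φ` is a simplicial covering map from `K` to `L`: it is simplicial, and the preimage of
every simplex of `L` is a (nonempty) union of pairwise disjoint simplices of `K`, each of
which is mapped bijectively onto it. -/
def IsCovering {a b : ℕ} (φ : Fin a → Fin b) (K : Finset (Finset (Fin a)))
    (L : Finset (Finset (Fin b))) : Prop :=
  (∀ s ∈ K, s.image φ ∈ L) ∧
  ∀ G ∈ L, (∃ F ∈ K, F.image φ = G) ∧
    (∀ F ∈ K, F.image φ = G → F.card = G.card) ∧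
    ∀ F ∈ K, ∀ F' ∈ K, F.image φ = G → F'.image φ = G → F ≠ F' → Disjoint F F'

/-- The strong covering condition in dimension `n`: for every `(n+1)`-simplex `Gb` of `L`
with facet `G`, and every `F` in the fiber over `G`, there is an `(n+1)`-simplex `Fb` of
`K` containing `F` with `φ(Fb) = Gb`. -/
def StrongAt {a b : ℕ} (φ : Fin a → Fin b) (K : Finset (Finset (Fin a)))
    (L : Finset (Finset (Fin b))) (n : ℕ) : Prop :=
  ∀ Gb ∈ faces L (n + 1), ∀ G ∈ faces L n, G ⊆ Gb →
    ∀ F ∈ faces K n, F.image φ = G →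
      ∃ Fb ∈ faces K (n + 1), F ⊆ Fb ∧ Fb.image φ = Gb

/-- `L` is `(n+1)`-path connected: any two `(n+1)`-simplices are joined by a chain of
`(n+1)`-simplices in which consecutive ones are `n`-down neighbours (share an `n`-face). -/
def UpConn {b : ℕ} (L : Finset (Finset (Fin b))) (n : ℕ) : Prop :=
  ∀ s ∈ faces L (n + 1), ∀ t ∈ faces L (n + 1),
    Relation.ReflTransGen (fun x y => y ∈ faces L (n + 1) ∧ (x ∩ y).card = n + 1) s t

/-- `μ` is an eigenvalue of the weighted up-Laplacian `L^{up}_n(K, w)`. -/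
def IsUpEig {m : ℕ} (K : Finset (Finset (Fin m))) (w : Finset (Fin m) → ℝ) (n : ℕ)
    (μ : ℝ) : Prop :=
  ∃ g : Finset (Fin m) → ℝ, g ≠ 0 ∧ (∀ F, F ∉ faces K n → g F = 0) ∧
    ∀ F ∈ faces K n, upLap K w n g F = μ * g F

/-- The normalizing weight function: weight `1` on `(n+1)`-simplices and the degree
(number of `(n+1)`-cofaces) on lower simplices. -/
def normWeight {m : ℕ} (K : Finset (Finset (Fin m))) (n : ℕ) (F : Finset (Fin m)) : ℝ :=
  if F.card = n + 2 then 1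
  else (((faces K (n + 1)).filter fun s => F ⊆ s).card : ℝ)

/-!
A covering map is injective on the cofaces of a fixed simplex `F`, since two distinct simplices
over the same simplex of `L` are disjoint while both contain `F`; the strong covering condition
says precisely that it is also onto the cofaces of `φ(F)`.
-/

lemma mem_faces_iff {m : ℕ} {K : Finset (Finset (Fin m))} {n : ℕ} {s : Finset (Fin m)} :
    s ∈ faces K n ↔ s ∈ K ∧ s.card = n + 1 :=
  Finset.mem_filter

namespace IsCovering

variable {a b : ℕ} {φ : Fin a → Fin b} {K : Finset (Finset (Fin a))}
  {L : Finset (Finset (Fin b))}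

lemma image_mem_faces (hcov : IsCovering φ K L) {n : ℕ} {s : Finset (Fin a)}
    (hs : s ∈ faces K n) : s.image φ ∈ faces L n := by
  rw [mem_faces_iff] at hs ⊢
  have himage : s.image φ ∈ L := hcov.1 s hs.1
  exact ⟨himage, ((hcov.2 _ himage).2.1 s hs.1 rfl).symm.trans hs.2⟩

lemma eq_of_image_eq_of_subset (hcov : IsCovering φ K L) {F s t : Finset (Fin a)}
    (hF : F.Nonempty) (hs : s ∈ K) (ht : t ∈ K) (hFs : F ⊆ s) (hFt : F ⊆ t)
    (hst : s.image φ = t.image φ) : s = t := by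
  by_contra hne
  obtain ⟨v, hv⟩ := hF
  have hdisj := (hcov.2 _ (hcov.1 s hs)).2.2 s hs t ht rfl hst.symm hne
  exact Finset.disjoint_left.mp hdisj (hFs hv) (hFt hv)

end IsCovering

theorem stmt_14_general {a b n : ℕ} (K : Finset (Finset (Fin a))) (L : Finset (Finset (Fin b)))
    (φ : Fin a → Fin b) (hcov : IsCovering φ K L) (hstrong : StrongAt φ K L n)
    (F : Finset (Fin a)) (hF : F ∈ faces K n) :
    ((faces K (n + 1)).filter fun Fb => F ⊆ Fb).card
      = ((faces L (n + 1)).filter fun Gb => F.image φ ⊆ Gb).card := by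
  have hFne : F.Nonempty := Finset.card_pos.mp (by rw [(mem_faces_iff.mp hF).2]; omega)
  refine Finset.card_nbij (Finset.image φ) ?maps ?inj ?surj
  case maps =>
    intro Fb hFb
    rw [Finset.mem_coe, Finset.mem_filter] at hFb ⊢
    exact ⟨hcov.image_mem_faces hFb.1, Finset.image_subset_image hFb.2⟩
  case inj =>
    intro s hs t ht hst
    rw [Finset.mem_coe, Finset.mem_filter, mem_faces_iff] at hs ht
    exact hcov.eq_of_image_eq_of_subset hFne hs.1.1 ht.1.1 hs.2 ht.2 hst
  case surj =>
    intro Gb hGb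
    rw [Finset.mem_coe, Finset.mem_filter] at hGb
    obtain ⟨Fb, hFb, hFFb, hFbGb⟩ :=
      hstrong Gb hGb.1 _ (hcov.image_mem_faces hF) hGb.2 F hF rfl
    exact ⟨Fb, Finset.mem_coe.mpr (Finset.mem_filter.mpr ⟨hFb, hFFb⟩), hFbGb⟩

/-- **Lemma 3.9.** If `φ : K → L` is a strong covering (in dimension `n`), then for every
`n`-simplex `F` of `K` with `φ(F) = G`, the number of `(n+1)`-simplices of `K` containing
`F` equals the number of `(n+1)`-simplices of `L` containing `G`. -/
theorem stmt_14 {a b n : ℕ} (K : Finset (Finset (Fin a))) (L : Finset (Finset (Fin b)))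
    (hK : IsComplex K) (hL : IsComplex L)
    (φ : Fin a → Fin b) (hcov : IsCovering φ K L) (hstrong : StrongAt φ K L n)
    (F : Finset (Fin a)) (hF : F ∈ faces K n) :
    ((faces K (n + 1)).filter fun Fb => F ⊆ Fb).card
      = ((faces L (n + 1)).filter fun Gb => F.image φ ⊆ Gb).card :=
  stmt_14_general K L φ hcov hstrong F hF
end

section
/- Let φ : K → L be a strong covering of finite simplicial complexes with L (n+1)-path connected. Then: (i) every eigenvalue of the combinatorial up-Laplacian L^{up}_n(L) (unit weights) is an eigenvalue of L^{up}_n(K); and (ii) every eigenvalue of the normalized up-Laplacian Δ^{up}_n(L) is an eigenvalue of Δ^{up}_n(K). -/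
namespace List

variable {α β : Type*}

def invCount [LT α] [DecidableLT α] : List α → ℕ
  | [] => 0
  | x :: t => t.countP (· < x) + invCount t

theorem countP_eq_sum_fin (t : List α) (p : α → Bool) :
    t.countP p = ∑ q : Fin t.length, if p (t.get q) then 1 else 0 := by
  induction t with
  | nil => simp
  | cons x t ih =>
    show _ = ∑ q : Fin (t.length + 1), if p ((x :: t).get q) then 1 else 0
    rw [List.countP_cons, Fin.sum_univ_succ, ih, add_comm]
    rfl

theorem card_inversions_eq_invCount [LinearOrder α] (l : List α) :
    (Finset.univ.filter
      (fun p : Fin l.length × Fin l.length => p.1 < p.2 ∧ l.get p.2 < l.get p.1)).card =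
      l.invCount := by
  induction l with
  | nil => rfl
  | cons x t ih =>
    rw [Finset.card_filter, Fintype.sum_prod_type] at ih ⊢
    show (∑ i : Fin (t.length + 1), ∑ j : Fin (t.length + 1),
      if i < j ∧ (x :: t).get j < (x :: t).get i then 1 else 0) = _
    have hrow : ∀ i : Fin t.length, (∑ j : Fin (t.length + 1),
        if i.succ < j ∧ (x :: t).get j < (x :: t).get i.succ then 1 else 0) =
        ∑ j : Fin t.length, if i < j ∧ t.get j < t.get i then 1 else 0 := fun i => by
      rw [Fin.sum_univ_succ]
      simp [Fin.succ_lt_succ_iff]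
    rw [Fin.sum_univ_succ, Finset.sum_congr rfl fun i _ => hrow i, ih, invCount,
      countP_eq_sum_fin, Fin.sum_univ_succ]
    simp [Fin.succ_pos]

theorem idxOf_eq_countP_lt [LinearOrder α] (l : List α) (hl : l.Pairwise (· < ·)) {x : α}
    (hx : x ∈ l) : l.idxOf x = l.countP (· < x) := by
  induction l with
  | nil => cases hx
  | cons y t ih =>
    obtain ⟨hyt, ht⟩ := List.pairwise_cons.1 hl
    rcases eq_or_ne y x with rfl | hne
    · have : t.countP (· < y) = 0 :=
        List.countP_eq_zero.2 fun z hz => by simpa using (hyt z hz).le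
      simp [this]
    · have hxt : x ∈ t := (List.mem_cons.1 hx).resolve_left hne.symm
      rw [List.idxOf_cons_ne _ hne, List.countP_cons, ih ht hxt]
      simp [hyt x hxt]

/- Moving `φ v` to the front of `l.map φ` takes `l.idxOf v` adjacent transpositions; there it
is involved in exactly the inversions with the smaller values. -/
theorem neg_one_pow_invCount_map [DecidableEq α] [LinearOrder β] (l : List α) (φ : α → β)
    (hl : (l.map φ).Nodup) {v : α} (hv : v ∈ l) :
    (-1 : ℝ) ^ (l.map φ).invCount =
      (-1) ^ l.idxOf v * (-1) ^ (l.map φ).countP (· < φ v) *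
        (-1) ^ ((l.erase v).map φ).invCount := by
  induction l with
  | nil => cases hv
  | cons x t ih =>
    obtain ⟨hxt, ht⟩ := List.nodup_cons.1 hl
    rcases eq_or_ne x v with rfl | hne
    · simp [invCount, pow_add, mul_comm]
    · have hvt : v ∈ t := (List.mem_cons.1 hv).resolve_left hne.symm
      have hφ : φ x ≠ φ v := fun h => hxt (h ▸ List.mem_map_of_mem hvt)
      have hcount : (t.map φ).countP (· < φ x) =
          ((t.erase v).map φ).countP (· < φ x) + if φ v < φ x then 1 else 0 := by
        rw [((List.perm_cons_erase hvt).map φ).countP_eq, List.map_cons, List.countP_cons]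
        simp [add_comm]
      rw [List.erase_cons_tail (by simpa using hne), List.idxOf_cons_ne _ hne]
      simp only [List.map_cons, invCount, List.countP_cons, hcount, pow_add, ih ht hvt]
      rcases lt_or_gt_of_ne hφ with h | h
      · simp [h, h.not_gt]
        ring
      · simp [h, h.not_gt]
        ring

end List

theorem Finset.sort_erase {α : Type*} [LinearOrder α] (s : Finset α) (v : α) :
    (s.erase v).sort (· ≤ ·) = (s.sort (· ≤ ·)).erase v := by
  refine List.Perm.eq_of_pairwise' (Finset.pairwise_sort _ _)
    ((Finset.pairwise_sort _ _).sublist List.erase_sublist) ?_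
  rw [← Multiset.coe_eq_coe, ← Multiset.coe_erase, Finset.sort_eq, Finset.sort_eq,
    Finset.erase_val]

section Signs

variable {a b : ℕ} {φ : Fin a → Fin b}

theorem incSign_mul_self {m : ℕ} (s : Finset (Fin m)) (v : Fin m) :
    incSign s v * incSign s v = 1 := by
  rw [incSign, ← pow_add]
  exact Even.neg_one_pow ⟨_, rfl⟩

theorem nodup_map_sort_of_injOn {s : Finset (Fin a)} (hs : Set.InjOn φ s) :
    ((s.sort (· ≤ ·)).map φ).Nodup :=
  (s.sort_nodup _).map_on fun _ hx _ hy hxy =>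
    hs ((s.mem_sort _).1 hx) ((s.mem_sort _).1 hy) hxy

theorem mapSign_of_injOn {s : Finset (Fin a)} (hs : Set.InjOn φ s) :
    mapSign φ s = (-1) ^ ((s.sort (· ≤ ·)).map φ).invCount := by
  rw [mapSign, if_pos (nodup_map_sort_of_injOn hs), List.card_inversions_eq_invCount]

theorem mapSign_ne_zero {s : Finset (Fin a)} (hs : Set.InjOn φ s) : mapSign φ s ≠ 0 := by
  rw [mapSign_of_injOn hs]
  exact pow_ne_zero _ (by norm_num)

theorem Finset.image_erase_of_injOn {α β : Type*} [DecidableEq α] [DecidableEq β] {f : α → β}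
    {s : Finset α} (hs : Set.InjOn f s) {v : α} (hv : v ∈ s) :
    (s.erase v).image f = (s.image f).erase (f v) := by
  ext w
  simp only [Finset.mem_image, Finset.mem_erase]
  constructor
  · rintro ⟨u, ⟨hne, hu⟩, rfl⟩
    exact ⟨fun h => hne (hs hu hv h), u, hu, rfl⟩
  · rintro ⟨hne, u, hu, rfl⟩
    exact ⟨u, ⟨fun h => hne (h ▸ rfl), hu⟩, rfl⟩

theorem mapSign_eq_incSign_mul_mapSign_erase {s : Finset (Fin a)} (hs : Set.InjOn φ s)
    {v : Fin a} (hv : v ∈ s) :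
    mapSign φ s = incSign s v * incSign (s.image φ) (φ v) * mapSign φ (s.erase v) := by
  have hnd := nodup_map_sort_of_injOn hs
  have hval : s.val.map φ = ((s.sort (· ≤ ·)).map φ : Multiset (Fin b)) := by
    rw [← Multiset.map_coe, Finset.sort_eq]
  have hperm : ((s.image φ).sort (· ≤ ·)).Perm ((s.sort (· ≤ ·)).map φ) := by
    rw [← Multiset.coe_eq_coe, Finset.sort_eq, Finset.image_val, ← hval,
      Multiset.dedup_eq_self.2 (hval ▸ Multiset.coe_nodup.2 hnd)]
  have hidx : ((s.image φ).sort (· ≤ ·)).idxOf (φ v) =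
      ((s.sort (· ≤ ·)).map φ).countP (· < φ v) := by
    rw [List.idxOf_eq_countP_lt _ (Finset.sortedLT_sort _).pairwise
      ((Finset.mem_sort _).2 (Finset.mem_image_of_mem φ hv)), hperm.countP_eq]
  rw [mapSign_of_injOn hs, mapSign_of_injOn (hs.mono (s.erase_subset v)), incSign, incSign,
    hidx, Finset.sort_erase, List.neg_one_pow_invCount_map _ φ hnd ((s.mem_sort _).2 hv)]

theorem incSign_mul_mapSign_insert {F : Finset (Fin a)} {v : Fin a} (hv : v ∉ F)
    (hs : Set.InjOn φ (insert v F : Finset (Fin a))) :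
    incSign (insert v F) v * mapSign φ (insert v F) =
      incSign ((insert v F).image φ) (φ v) * mapSign φ F := by
  rw [mapSign_eq_incSign_mul_mapSign_erase hs (F.mem_insert_self v), Finset.erase_insert hv]
  linear_combination (incSign ((insert v F).image φ) (φ v) * mapSign φ F) *
    incSign_mul_self (insert v F) v

theorem coboundary_pullback {s : Finset (Fin a)} (hs : Set.InjOn φ s) {f : Finset (Fin a) → ℝ}
    {g : Finset (Fin b) → ℝ} (hf : ∀ u ∈ s, f (s.erase u) = pullback φ g (s.erase u)) :
    coboundary f s = mapSign φ s * coboundary g (s.image φ) := by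
  rw [coboundary, coboundary, Finset.sum_image hs, Finset.mul_sum]
  refine Finset.sum_congr rfl fun u hu => ?_
  rw [hf u hu, pullback, Finset.image_erase_of_injOn hs hu,
    mapSign_eq_incSign_mul_mapSign_erase hs hu]
  linear_combination (-(incSign s u * mapSign φ (s.erase u) *
    g ((s.image φ).erase (φ u)))) * incSign_mul_self (s.image φ) (φ u)

end Signs

section Covering

variable {a b n : ℕ} {φ : Fin a → Fin b} {K : Finset (Finset (Fin a))}
  {L : Finset (Finset (Fin b))}

theorem mem_faces {m k : ℕ} {K : Finset (Finset (Fin m))} {F : Finset (Fin m)} :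
    F ∈ faces K k ↔ F ∈ K ∧ F.card = k + 1 :=
  Finset.mem_filter

theorem IsComplex.erase_mem_faces {m : ℕ} {K : Finset (Finset (Fin m))} (hK : IsComplex K)
    {s : Finset (Fin m)} (hs : s ∈ faces K (n + 1)) {u : Fin m} (hu : u ∈ s) :
    s.erase u ∈ faces K n := by
  obtain ⟨hsK, hsc⟩ := mem_faces.1 hs
  have hcard : (s.erase u).card = n + 1 := by rw [Finset.card_erase_of_mem hu, hsc]; rfl
  exact mem_faces.2 ⟨hK.2 s hsK _ (s.erase_subset u) (Finset.card_pos.1 (by omega)), hcard⟩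

theorem IsCovering.card_image (hcov : IsCovering φ K L) {F : Finset (Fin a)} (hF : F ∈ K) :
    (F.image φ).card = F.card :=
  ((hcov.2 _ (hcov.1 F hF)).2.1 F hF rfl).symm

theorem IsCovering.injOn (hcov : IsCovering φ K L) {F : Finset (Fin a)} (hF : F ∈ K) :
    Set.InjOn φ F :=
  Finset.injOn_of_card_image_eq (hcov.card_image hF)

theorem IsCovering.image_mem_faces_s17 (hcov : IsCovering φ K L) {k : ℕ} {F : Finset (Fin a)}
    (hF : F ∈ faces K k) : F.image φ ∈ faces L k := by
  obtain ⟨hFK, hFc⟩ := mem_faces.1 hF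
  exact mem_faces.2 ⟨hcov.1 F hFK, by rw [hcov.card_image hFK, hFc]⟩

/- `s ↦ φ(s)` is a bijection from the cofaces of `F` onto those of `φ(F)`: surjectivity is the
strong covering condition, injectivity the disjointness of the sheets over a simplex. -/
theorem IsCovering.sum_cofaces_image (hcov : IsCovering φ K L) (hstrong : StrongAt φ K L n)
    {F : Finset (Fin a)} (hF : F ∈ faces K n) (H : Finset (Fin b) → ℝ) :
    ∑ s ∈ (faces K (n + 1)).filter (fun s => F ⊆ s), H (s.image φ) =
      ∑ t ∈ (faces L (n + 1)).filter (fun t => F.image φ ⊆ t), H t := by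
  refine Finset.sum_bij (fun s _ => s.image φ) ?_ ?_ ?_ fun _ _ => rfl
  · intro s hs
    obtain ⟨hs, hFs⟩ := Finset.mem_filter.1 hs
    exact Finset.mem_filter.2 ⟨hcov.image_mem_faces_s17 hs, Finset.image_subset_image hFs⟩
  · intro s hs s' hs' himage
    obtain ⟨hs, hFs⟩ := Finset.mem_filter.1 hs
    obtain ⟨hs', hFs'⟩ := Finset.mem_filter.1 hs'
    by_contra hne
    have hsK := (mem_faces.1 hs).1
    have hdisj := (hcov.2 _ (hcov.1 s hsK)).2.2 s hsK s' (mem_faces.1 hs').1 rfl himage.symm hne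
    obtain ⟨x, hx⟩ := Finset.card_pos.1 (by rw [(mem_faces.1 hF).2]; omega)
    exact Finset.disjoint_left.1 hdisj (hFs hx) (hFs' hx)
  · intro t ht
    obtain ⟨ht, hFt⟩ := Finset.mem_filter.1 ht
    obtain ⟨s, hs, hFs, rfl⟩ :=
      hstrong t ht (F.image φ) (hcov.image_mem_faces_s17 hF) hFt F hF rfl
    exact ⟨s, Finset.mem_filter.2 ⟨hs, hFs⟩, rfl⟩

theorem IsCovering.normWeight_image (hcov : IsCovering φ K L) (hstrong : StrongAt φ K L n)
    {F : Finset (Fin a)} (hF : F ∈ faces K n) :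
    normWeight K n F = normWeight L n (F.image φ) := by
  have hFc := (mem_faces.1 hF).2
  rw [normWeight, normWeight, if_neg (by omega),
    if_neg (by rw [hcov.card_image (mem_faces.1 hF).1]; omega)]
  simpa using hcov.sum_cofaces_image hstrong hF fun _ => 1

theorem IsCovering.normWeight_image_of_mem_faces_succ (hcov : IsCovering φ K L)
    {s : Finset (Fin a)} (hs : s ∈ faces K (n + 1)) :
    normWeight K n s = normWeight L n (s.image φ) := by
  obtain ⟨hsK, hsc⟩ := mem_faces.1 hs
  rw [normWeight, normWeight, if_pos hsc, if_pos (by rw [hcov.card_image hsK, hsc])]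

theorem IsCovering.upLap_pullback (hcov : IsCovering φ K L) (hK : IsComplex K)
    (hstrong : StrongAt φ K L n) {wK : Finset (Fin a) → ℝ} {wL : Finset (Fin b) → ℝ}
    (hw : ∀ F ∈ faces K n, wK F = wL (F.image φ))
    (hw' : ∀ s ∈ faces K (n + 1), wK s = wL (s.image φ))
    {f : Finset (Fin a) → ℝ} {g : Finset (Fin b) → ℝ}
    (hf : ∀ F ∈ faces K n, f F = pullback φ g F) {F : Finset (Fin a)} (hF : F ∈ faces K n) :
    upLap K wK n f F = mapSign φ F * upLap L wL n g (F.image φ) := by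
  rw [upLap, upLap, hw F hF]
  split_ifs with hw0
  · rw [mul_zero]
  rw [← hcov.sum_cofaces_image hstrong hF
      fun t => wL t * (∑ w ∈ t \ F.image φ, incSign t w) * coboundary g t,
    Finset.mul_sum, Finset.mul_sum, Finset.mul_sum]
  refine Finset.sum_congr rfl fun s hs => ?_
  obtain ⟨hs, hFs⟩ := Finset.mem_filter.1 hs
  obtain ⟨hsK, hsc⟩ := mem_faces.1 hs
  have hinj := hcov.injOn hsK
  obtain ⟨v, hvF, rfl⟩ :=
    Finset.exists_eq_insert_iff.2 ⟨hFs, by rw [hsc, (mem_faces.1 hF).2]⟩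
  have hφv : φ v ∉ F.image φ := fun h => by
    obtain ⟨u, hu, huv⟩ := Finset.mem_image.1 h
    exact hvF (hinj (Finset.mem_insert_of_mem hu) (Finset.mem_insert_self v F) huv ▸ hu)
  rw [coboundary_pullback hinj fun u hu => hf _ (hK.erase_mem_faces hs hu), hw' _ hs,
    Finset.insert_sdiff_cancel hvF, Finset.sum_singleton, Finset.image_insert,
    Finset.insert_sdiff_cancel hφv, Finset.sum_singleton, ← Finset.image_insert]
  linear_combination (wL ((insert v F).image φ) * coboundary g ((insert v F).image φ) *
    (wL (F.image φ))⁻¹) * incSign_mul_mapSign_insert hvF hinj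

theorem IsUpEig.of_covering (hcov : IsCovering φ K L) (hK : IsComplex K)
    (hstrong : StrongAt φ K L n) {wK : Finset (Fin a) → ℝ} {wL : Finset (Fin b) → ℝ}
    (hw : ∀ F ∈ faces K n, wK F = wL (F.image φ))
    (hw' : ∀ s ∈ faces K (n + 1), wK s = wL (s.image φ)) {μ : ℝ}
    (h : IsUpEig L wL n μ) : IsUpEig K wK n μ := by
  classical
  obtain ⟨g, hg0, hgsupp, hgeig⟩ := h
  set f : Finset (Fin a) → ℝ := fun F => if F ∈ faces K n then pullback φ g F else 0
  have hf : ∀ F ∈ faces K n, f F = pullback φ g F := fun F hF => if_pos hF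
  refine ⟨f, ?_, fun F hF => if_neg hF, fun F hF => ?_⟩
  · obtain ⟨G, hG⟩ := Function.ne_iff.1 hg0
    have hGL : G ∈ faces L n := by_contra fun h => hG (hgsupp G h)
    obtain ⟨F, hFK, rfl⟩ := (hcov.2 G (mem_faces.1 hGL).1).1
    have hF : F ∈ faces K n :=
      mem_faces.2 ⟨hFK, by rw [← hcov.card_image hFK]; exact (mem_faces.1 hGL).2⟩
    refine Function.ne_iff.2 ⟨F, ?_⟩
    rw [hf F hF, pullback]
    exact mul_ne_zero (mapSign_ne_zero (hcov.injOn hFK)) hG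
  · rw [hcov.upLap_pullback hK hstrong hw hw' hf hF, hgeig _ (hcov.image_mem_faces_s17 hF),
      hf F hF, pullback]
    ring

end Covering

theorem stmt_17_general {a b n : ℕ} (K : Finset (Finset (Fin a))) (L : Finset (Finset (Fin b)))
    (hK : IsComplex K)
    (φ : Fin a → Fin b) (hcov : IsCovering φ K L)
    (hstrong : ∀ d : ℕ, StrongAt φ K L d) :
    (∀ μ : ℝ, IsUpEig L (fun _ => 1) n μ → IsUpEig K (fun _ => 1) n μ) ∧
    (∀ μ : ℝ, IsUpEig L (normWeight L n) n μ → IsUpEig K (normWeight K n) n μ) :=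
  ⟨fun _ => IsUpEig.of_covering hcov hK (hstrong n) (fun _ _ => rfl) (fun _ _ => rfl),
    fun _ => IsUpEig.of_covering hcov hK (hstrong n)
      (fun _ hF => hcov.normWeight_image (hstrong n) hF)
      (fun _ hs => hcov.normWeight_image_of_mem_faces_succ hs)⟩

/-- **Corollary 3.12.** If `φ : K → L` is a strong covering with `L` `(n+1)`-path
connected, then (i) every eigenvalue of the combinatorial up-Laplacian `L^{up}_n(L)`
(unit weights) is an eigenvalue of `L^{up}_n(K)`, and (ii) every eigenvalue of the
normalized up-Laplacian `Δ^{up}_n(L)` is an eigenvalue of `Δ^{up}_n(K)`. -/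
theorem stmt_17 {a b n : ℕ} (K : Finset (Finset (Fin a))) (L : Finset (Finset (Fin b)))
    (hK : IsComplex K) (hL : IsComplex L)
    (φ : Fin a → Fin b) (hcov : IsCovering φ K L)
    (hstrong : ∀ d : ℕ, StrongAt φ K L d) (hconn : UpConn L n) :
    (∀ μ : ℝ, IsUpEig L (fun _ => 1) n μ → IsUpEig K (fun _ => 1) n μ) ∧
    (∀ μ : ℝ, IsUpEig L (normWeight L n) n μ → IsUpEig K (normWeight K n) n μ) :=
  stmt_17_general K L hK φ hcov hstrong
end
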